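/- Let m ≥ 2 be even and let i, j be integers with 0 ≤ i ≤ α^(m) and 0 ≤ j ≤ β^(m). Then: (a) P^(m)(i,j) implies P^(m+1)(2i+1, 2j); (b) if i ≥ 1, then P^(m)(i−1,j) and P^(m)(i,j) together imply P^(m+1)(2i, 2j); (c) if j+1 ≤ β^(m), then P^(m)(i,j) and P^(m)(i,j+1) together imply P^(m+1)(2i+1, 2j+1); (d) if i ≥ 1 and j+1 ≤ β^(m), then P^(m)(i−1,j), P^(m)(i,j), P^(m)(i−1,j+1) and P^(m)(i,j+1) together imply P^(m+1)(2i, 2j+1). -/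

import Mathlib

open Module

/-- `α(m)`: the largest integer not exceeding `(2/3)·2^m`. -/
def alph (m : ℕ) : ℕ := 2 ^ (m + 1) / 3

/-- `β(m)`: the largest integer not exceeding `(1/3)·2^m`. -/
def bet (m : ℕ) : ℕ := 2 ^ m / 3

/-- `wt x`: the number of ones in the binary representation of `x`. -/
def wtN (x : ℕ) : ℕ := (Nat.digits 2 x).count 1

/-- `w_l(S)`: the number of elements of `S` of binary weight at least `l`. -/
def wcount (l : ℕ) (S : Finset ℕ) : ℕ := (S.filter fun x => l ≤ wtN x).card

/-- The statement `P^(m)(i,j)`: for every `l ∈ {1,…,m}`,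
`w_l([α−i, α−1]) + w_l([β−j, β−1]) ≥ w_l([1, i+j])`. -/
def Pm (m i j : ℕ) : Prop :=
  ∀ l, 1 ≤ l → l ≤ m →
    wcount l (Finset.Icc (alph m - i) (alph m - 1)) +
      wcount l (Finset.Icc (bet m - j) (bet m - 1)) ≥
      wcount l (Finset.Icc 1 (i + j))

/-!
For even `m` one has `α(m+1) = 2α(m) + 1` and `β(m+1) = 2β(m)`, so each interval occurring in
`P^(m+1)` splits into even elements `2x` and odd elements `2x + 1`, where `x` runs over an interval
occurring in `P^(m)`, up to an endpoint. Since `wt (2x) = wt x` and `wt (2x + 1) = wt x + 1`, a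
count `w_{l+1}` at level `m + 1` is a sum of a `w_{l+1}` and a `w_l` count at level `m`, so adding
the hypotheses at levels `l + 1` and `l` gives `P^(m+1)` at level `l + 1`. The leftover endpoint
terms are absorbed by `α(m)`, whose weight is at least `1`.
-/

open Finset

lemma wtN_two_mul (x : ℕ) : wtN (2 * x) = wtN x := by
  rcases Nat.eq_zero_or_pos x with rfl | hx
  · rfl
  · rw [wtN, Nat.digits_def' (by norm_num) (by omega)]
    simp [wtN]

lemma wtN_two_mul_add_one (x : ℕ) : wtN (2 * x + 1) = wtN x + 1 := by
  rw [wtN, Nat.digits_def' (by norm_num) (by omega)]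
  simp [wtN, Nat.mul_add_div]

lemma one_le_wtN {x : ℕ} (hx : 1 ≤ x) : 1 ≤ wtN x := by
  induction x using Nat.evenOddRec with
  | h0 => omega
  | h_even n ih => rw [wtN_two_mul]; exact ih (by omega)
  | h_odd n _ => rw [wtN_two_mul_add_one]; omega

lemma wtN_le_of_lt_two_pow {x m : ℕ} (h : x < 2 ^ m) : wtN x ≤ m := by
  rcases Nat.eq_zero_or_pos x with rfl | hx
  · exact Nat.zero_le m
  · calc wtN x ≤ (Nat.digits 2 x).length := List.count_le_length
      _ = Nat.log 2 x + 1 := Nat.length_digits 2 x (by norm_num) hx.ne'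
      _ ≤ m := Nat.log_lt_of_lt_pow hx.ne' h

def wtInd (l x : ℕ) : ℕ := if l ≤ wtN x then 1 else 0

lemma wtInd_zero_le {a : ℕ} (ha : 1 ≤ a) (l : ℕ) : wtInd l 0 ≤ wtInd (l + 1) a := by
  have := one_le_wtN ha
  have h0 : wtN 0 = 0 := rfl
  unfold wtInd
  split_ifs <;> omega

lemma wtInd_succ_le (l x : ℕ) : wtInd (l + 1) x ≤ wtInd l x := by
  unfold wtInd
  split_ifs <;> omega

lemma wcount_insert {x : ℕ} {S : Finset ℕ} (hx : x ∉ S) (l : ℕ) :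
    wcount l (insert x S) = wcount l S + wtInd l x := by
  rw [wcount, filter_insert, wtInd]
  split_ifs with h
  · rw [card_insert_of_notMem (fun hm => hx (mem_filter.1 hm).1)]; rfl
  · rfl

lemma wcount_zero (S : Finset ℕ) : wcount 0 S = S.card := by
  simp [wcount]

lemma wcount_Icc_one_eq_zero {m n : ℕ} (h : n < 2 ^ m) : wcount (m + 1) (Icc 1 n) = 0 := by
  rw [wcount, card_eq_zero, filter_eq_empty_iff]
  intro x hx
  have := wtN_le_of_lt_two_pow (m := m) (x := x) (by simp at hx; omega)
  omega

lemma wcount_succ_of_halves {S E O : Finset ℕ} (hE : ∀ x, 2 * x ∈ S ↔ x ∈ E)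
    (hO : ∀ x, 2 * x + 1 ∈ S ↔ x ∈ O) (l : ℕ) :
    wcount (l + 1) S = wcount (l + 1) E + wcount l O := by
  have hS : S = E.image (2 * ·) ∪ O.image (2 * · + 1) := by
    ext x
    obtain ⟨y, rfl | rfl⟩ := Nat.even_or_odd' x <;> simp [hE, hO] <;> omega
  have hdisj : Disjoint (E.image (2 * ·)) (O.image (2 * · + 1)) := by
    simp only [disjoint_left, mem_image]
    omega
  rw [hS, wcount, filter_union, card_union_of_disjoint (disjoint_filter_filter hdisj),
    filter_image, filter_image, card_image_of_injective _ (fun a b h => by simpa using h),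
    card_image_of_injective _ (fun a b h => by simpa using h)]
  simp [wcount, wtN_two_mul, wtN_two_mul_add_one]

/-- The `n` numbers just below `t`; for `t = 0` truncated subtraction makes it `{0}`. -/
def topSeg (t n : ℕ) : Finset ℕ := Icc (t - n) (t - 1)

section Doubling

variable {t n : ℕ} (l : ℕ)

lemma wcount_succ_topSeg_odd_odd (ht : 1 ≤ t) :
    wcount (l + 1) (topSeg (2 * t + 1) (2 * n + 1)) =
      wcount (l + 1) (topSeg t n) + wtInd (l + 1) t + wcount l (topSeg t n) := by
  rw [wcount_succ_of_halves (E := insert t (topSeg t n)) (O := topSeg t n)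
    (fun x => by simp [topSeg]; omega) (fun x => by simp [topSeg]; omega),
    wcount_insert (by simp [topSeg]; omega)]

lemma wcount_succ_topSeg_odd_even (ht : 1 ≤ t) :
    wcount (l + 1) (topSeg (2 * t + 1) (2 * n + 2)) =
      wcount (l + 1) (topSeg t n) + wtInd (l + 1) t + wcount l (topSeg t (n + 1)) := by
  rw [wcount_succ_of_halves (E := insert t (topSeg t n)) (O := topSeg t (n + 1))
    (fun x => by simp [topSeg]; omega) (fun x => by simp [topSeg]; omega),
    wcount_insert (by simp [topSeg]; omega)]

lemma wcount_succ_topSeg_even_even (ht : 1 ≤ t) :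
    wcount (l + 1) (topSeg (2 * t) (2 * n)) =
      wcount (l + 1) (topSeg t n) + wcount l (topSeg t n) :=
  wcount_succ_of_halves (fun x => by simp [topSeg]; omega) (fun x => by simp [topSeg]; omega) l

lemma wcount_succ_topSeg_even_odd (ht : 1 ≤ t) :
    wcount (l + 1) (topSeg (2 * t) (2 * n + 1)) =
      wcount (l + 1) (topSeg t n) + wcount l (topSeg t (n + 1)) :=
  wcount_succ_of_halves (fun x => by simp [topSeg]; omega) (fun x => by simp [topSeg]; omega) l

lemma wcount_succ_Icc_one_odd :
    wcount (l + 1) (Icc 1 (2 * n + 1)) =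
      wcount (l + 1) (Icc 1 n) + wtInd l 0 + wcount l (Icc 1 n) := by
  rw [wcount_succ_of_halves (E := Icc 1 n) (O := insert 0 (Icc 1 n))
    (fun x => by simp; omega) (fun x => by simp; omega), wcount_insert (by simp)]
  ring

lemma wcount_succ_Icc_one_even :
    wcount (l + 1) (Icc 1 (2 * n + 2)) =
      wcount (l + 1) (Icc 1 (n + 1)) + wtInd l 0 + wcount l (Icc 1 n) := by
  rw [wcount_succ_of_halves (E := Icc 1 (n + 1)) (O := insert 0 (Icc 1 n))
    (fun x => by simp; omega) (fun x => by simp; omega), wcount_insert (by simp)]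
  ring

end Doubling

lemma wcount_Icc_add_one_right {a b : ℕ} (h : a ≤ b + 1) (l : ℕ) :
    wcount l (Icc a (b + 1)) = wcount l (Icc a b) + wtInd l (b + 1) := by
  rw [← insert_Icc_right_eq_Icc_add_one h, wcount_insert (by simp)]

lemma wcount_topSeg_add_one {t n : ℕ} (h : n + 1 ≤ t) (l : ℕ) :
    wcount l (topSeg t (n + 1)) = wcount l (topSeg t n) + wtInd l (t - (n + 1)) := by
  rw [show topSeg t (n + 1) = insert (t - (n + 1)) (topSeg t n) by ext; simp [topSeg]; omega,
    wcount_insert (by simp [topSeg]; omega)]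

/-- Level `0` only compares cardinalities, and level `m + 1` has an empty right side. -/
lemma Pm.wcount_ge {m i j : ℕ} (hP : Pm m i j) (hi : i ≤ alph m) (hj : j ≤ bet m)
    (hij : i + j < 2 ^ m) {l : ℕ} (hl : l ≤ m + 1) :
    wcount l (topSeg (alph m) i) + wcount l (topSeg (bet m) j) ≥ wcount l (Icc 1 (i + j)) := by
  rcases Nat.eq_zero_or_pos l with rfl | hl₀
  · simp only [topSeg, wcount_zero, Nat.card_Icc]
    omega
  rcases hl.lt_or_eq with hlm | rfl
  · exact hP l hl₀ (by omega)
  · rw [wcount_Icc_one_eq_zero hij]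
    exact Nat.zero_le _

lemma alph_bet_of_even {m : ℕ} (hm : Even m) :
    3 * bet m + 1 = 2 ^ m ∧ alph m = 2 * bet m ∧ alph (m + 1) = 2 * alph m + 1 ∧
      bet (m + 1) = 2 * bet m := by
  obtain ⟨k, rfl⟩ := hm
  have h4 : 2 ^ (k + k) % 3 = 1 := by
    rw [← two_mul, pow_mul, Nat.pow_mod]; norm_num
  simp only [alph, bet, pow_succ]
  omega

section Succ

variable {m i j : ℕ}

theorem Pm.succ_two_mul_add_one_two_mul (hm : 2 ≤ m) (hme : Even m) (hi : i ≤ alph m)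
    (hj : j ≤ bet m) (hP : Pm m i j) : Pm (m + 1) (2 * i + 1) (2 * j) := by
  obtain ⟨hβ, hα, hα₁, hβ₁⟩ := alph_bet_of_even hme
  have hpow : 2 ^ 2 ≤ 2 ^ m := Nat.pow_le_pow_right (by norm_num) hm
  rintro (_ | l) hl₀ hl
  · omega
  change wcount _ (topSeg _ _) + wcount _ (topSeg _ _) ≥ _
  rw [hα₁, hβ₁, show 2 * i + 1 + 2 * j = 2 * (i + j) + 1 by ring,
    wcount_succ_topSeg_odd_odd l (by omega), wcount_succ_topSeg_even_even l (by omega),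
    wcount_succ_Icc_one_odd]
  have h₁ := hP.wcount_ge hi hj (by omega) (l := l + 1) (by omega)
  have h₀ := hP.wcount_ge hi hj (by omega) (l := l) (by omega)
  have := wtInd_zero_le (a := alph m) (by omega) l
  omega

theorem Pm.succ_two_mul_two_mul (hm : 2 ≤ m) (hme : Even m) (hi : i ≤ alph m)
    (hj : j ≤ bet m) (hi₀ : 1 ≤ i) (hP' : Pm m (i - 1) j) (hP : Pm m i j) :
    Pm (m + 1) (2 * i) (2 * j) := by
  obtain ⟨hβ, hα, hα₁, hβ₁⟩ := alph_bet_of_even hme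
  have hpow : 2 ^ 2 ≤ 2 ^ m := Nat.pow_le_pow_right (by norm_num) hm
  obtain ⟨k, rfl⟩ := Nat.exists_eq_add_of_le' hi₀
  rw [Nat.add_sub_cancel] at hP'
  rintro (_ | l) hl₀ hl
  · omega
  change wcount _ (topSeg _ _) + wcount _ (topSeg _ _) ≥ _
  rw [hα₁, hβ₁, show 2 * (k + 1) = 2 * k + 2 by ring,
    show 2 * k + 2 + 2 * j = 2 * (k + j) + 2 by ring,
    wcount_succ_topSeg_odd_even l (by omega), wcount_succ_topSeg_even_even l (by omega),
    wcount_succ_Icc_one_even, wcount_Icc_add_one_right (by omega)]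
  have h₁ := hP'.wcount_ge (by omega) hj (by omega) (l := l + 1) (by omega)
  have h₀ := hP.wcount_ge hi hj (by omega) (l := l) (by omega)
  rw [show k + 1 + j = k + j + 1 by ring, wcount_Icc_add_one_right (by omega)] at h₀
  have := wtInd_zero_le (a := alph m) (by omega) l
  have := wtInd_succ_le l (k + j + 1)
  omega

theorem Pm.succ_two_mul_add_one_two_mul_add_one (hme : Even m) (hi : i ≤ alph m)
    (hj₁ : j + 1 ≤ bet m) (hP : Pm m i j) (hP' : Pm m i (j + 1)) :
    Pm (m + 1) (2 * i + 1) (2 * j + 1) := by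
  obtain ⟨hβ, hα, hα₁, hβ₁⟩ := alph_bet_of_even hme
  rintro (_ | l) hl₀ hl
  · omega
  change wcount _ (topSeg _ _) + wcount _ (topSeg _ _) ≥ _
  rw [hα₁, hβ₁, show 2 * i + 1 + (2 * j + 1) = 2 * (i + j) + 2 by ring,
    wcount_succ_topSeg_odd_odd l (by omega), wcount_succ_topSeg_even_odd l (by omega),
    wcount_succ_Icc_one_even, wcount_Icc_add_one_right (by omega)]
  have h₁ := hP.wcount_ge hi (by omega) (by omega) (l := l + 1) (by omega)
  have h₀ := hP'.wcount_ge hi hj₁ (by omega) (l := l) (by omega)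
  rw [← add_assoc, wcount_Icc_add_one_right (by omega)] at h₀
  have := wtInd_zero_le (a := alph m) (by omega) l
  have := wtInd_succ_le l (i + j + 1)
  omega

theorem Pm.succ_two_mul_two_mul_add_one (hme : Even m) (hi : i ≤ alph m)
    (hi₀ : 1 ≤ i) (hj₁ : j + 1 ≤ bet m) (hP : Pm m i j) (hP' : Pm m (i - 1) (j + 1)) :
    Pm (m + 1) (2 * i) (2 * j + 1) := by
  obtain ⟨hβ, hα, hα₁, hβ₁⟩ := alph_bet_of_even hme
  obtain ⟨k, rfl⟩ := Nat.exists_eq_add_of_le' hi₀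
  rw [Nat.add_sub_cancel] at hP'
  rintro (_ | l) hl₀ hl
  · omega
  change wcount _ (topSeg _ _) + wcount _ (topSeg _ _) ≥ _
  rw [hα₁, hβ₁, show 2 * (k + 1) + (2 * j + 1) = 2 * (k + j + 1) + 1 by ring,
    show 2 * (k + 1) = 2 * k + 2 by ring,
    wcount_succ_topSeg_odd_even l (by omega), wcount_succ_topSeg_even_odd l (by omega),
    wcount_succ_Icc_one_odd, wcount_topSeg_add_one (by omega)]
  have h₁ := hP.wcount_ge hi (by omega) (by omega) (l := l + 1) (by omega)
  have h₀ := hP'.wcount_ge (by omega) hj₁ (by omega) (l := l) (by omega)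
  rw [wcount_topSeg_add_one (by omega), show k + 1 + j = k + j + 1 by ring] at h₁
  rw [← add_assoc] at h₀
  have := wtInd_zero_le (a := alph m) (by omega) l
  have := wtInd_succ_le l (alph m - (k + 1))
  omega

end Succ

/-- Lemma 8: implications among the `P` statements for even `m ≥ 2`. -/
theorem stmt17 (m : ℕ) (hm : 2 ≤ m) (hme : Even m) (i j : ℕ)
    (hi : i ≤ alph m) (hj : j ≤ bet m) :
    (Pm m i j → Pm (m + 1) (2 * i + 1) (2 * j)) ∧
    (1 ≤ i → Pm m (i - 1) j → Pm m i j → Pm (m + 1) (2 * i) (2 * j)) ∧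
    (j + 1 ≤ bet m → Pm m i j → Pm m i (j + 1) → Pm (m + 1) (2 * i + 1) (2 * j + 1)) ∧
    (1 ≤ i → j + 1 ≤ bet m → Pm m (i - 1) j → Pm m i j → Pm m (i - 1) (j + 1) →
      Pm m i (j + 1) → Pm (m + 1) (2 * i) (2 * j + 1)) :=
  ⟨Pm.succ_two_mul_add_one_two_mul hm hme hi hj,
    fun hi₀ => Pm.succ_two_mul_two_mul hm hme hi hj hi₀,
    fun hj₁ => Pm.succ_two_mul_add_one_two_mul_add_one hme hi hj₁,
    fun hi₀ hj₁ _ hP hP' _ => Pm.succ_two_mul_two_mul_add_one hme hi hi₀ hj₁ hP hP'⟩
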